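/- arXiv:1610.00441 — 4 statements merged into one kernel-verified Lean document; each statement's English description precedes it below -/
import Mathlib

section
/- Let M be a smooth manifold without boundary modelled on a finite-dimensional real normed space, and let N be a Hausdorff, σ-compact smooth manifold without boundary modelled on a finite-dimensional real normed space. Let f : M → N be a continuous map such that for every smooth function g : N → ℝ the composite g ∘ f : M → ℝ is smooth. Then f is smooth. -/
/-!
Smoothness of `f` at `x` is smoothness of the chart expression `extChartAt (f x) ∘ f` near `x`.
That chart, multiplied by a smooth bump function at `f x`, is a globally smooth `E'`-valued map
`g` on `N`, and its coordinates `l ∘ g` are smooth real functions; by hypothesis each `l ∘ g ∘ f`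
is smooth, hence so is `g ∘ f`, which agrees with the chart expression near `x`.
-/

open scoped Manifold ContDiff

open Filter Topology

theorem contMDiff_of_forall_continuousLinearMap_comp
    {𝕜 : Type*} [NontriviallyNormedField 𝕜] [CompleteSpace 𝕜]
    {E : Type*} [NormedAddCommGroup E] [NormedSpace 𝕜 E]
    {H : Type*} [TopologicalSpace H] {I : ModelWithCorners 𝕜 E H}
    {M : Type*} [TopologicalSpace M] [ChartedSpace H M]
    {F : Type*} [NormedAddCommGroup F] [NormedSpace 𝕜 F] [FiniteDimensional 𝕜 F]
    {n : WithTop ℕ∞} {u : M → F}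
    (h : ∀ l : F →L[𝕜] 𝕜, ContMDiff I 𝓘(𝕜, 𝕜) n (l ∘ u)) :
    ContMDiff I 𝓘(𝕜, F) n u := by
  let e := (Module.finBasis 𝕜 F).equivFunL
  have hcoords : ContMDiff I 𝓘(𝕜, Fin (Module.finrank 𝕜 F) → 𝕜) n (e ∘ u) :=
    contMDiff_pi_space.2 fun i =>
      h (ContinuousLinearMap.proj (R := 𝕜) (φ := fun _ => 𝕜) i ∘L e.toContinuousLinearMap)
  simpa [Function.comp_def] using (e.symm : _ →L[𝕜] F).contMDiff.comp hcoords

theorem exists_contMDiff_eventuallyEq_extChartAt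
    {E : Type*} [NormedAddCommGroup E] [NormedSpace ℝ E] [FiniteDimensional ℝ E]
    {H : Type*} [TopologicalSpace H] {I : ModelWithCorners ℝ E H}
    {M : Type*} [TopologicalSpace M] [ChartedSpace H M] [IsManifold I ∞ M] [T2Space M]
    (c : M) :
    ∃ g : M → E, ContMDiff I 𝓘(ℝ, E) ∞ g ∧ g =ᶠ[𝓝 c] extChartAt I c := by
  let φ : SmoothBumpFunction I c := Classical.arbitrary _
  refine ⟨fun x => φ x • extChartAt I c x, φ.contMDiff_smul contMDiffOn_extChartAt, ?_⟩
  filter_upwards [φ.eventuallyEq_one] with x hx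
  simp [hx]

theorem stmt_1_general
    {E : Type*} [NormedAddCommGroup E] [NormedSpace ℝ E]
    {E' : Type*} [NormedAddCommGroup E'] [NormedSpace ℝ E'] [FiniteDimensional ℝ E']
    {M : Type*} [TopologicalSpace M] [ChartedSpace E M]
    {N : Type*} [TopologicalSpace N] [ChartedSpace E' N]
    [IsManifold 𝓘(ℝ, E') (⊤ : ℕ∞) N]
    [T2Space N]
    (f : M → N) (hf : Continuous f)
    (h : ∀ g : N → ℝ, ContMDiff 𝓘(ℝ, E') 𝓘(ℝ, ℝ) (⊤ : ℕ∞) g →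
      ContMDiff 𝓘(ℝ, E) 𝓘(ℝ, ℝ) (⊤ : ℕ∞) (g ∘ f)) :
    ContMDiff 𝓘(ℝ, E) 𝓘(ℝ, E') (⊤ : ℕ∞) f := by
  intro x
  obtain ⟨g, hg, hg_chart⟩ := exists_contMDiff_eventuallyEq_extChartAt (I := 𝓘(ℝ, E')) (f x)
  have hgf : ContMDiff 𝓘(ℝ, E) 𝓘(ℝ, E') ∞ (g ∘ f) :=
    contMDiff_of_forall_continuousLinearMap_comp fun l => h (l ∘ g) (l.contMDiff.comp hg)
  refine contMDiffAt_iff_target.2 ⟨hf.continuousAt, ?_⟩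
  exact (hgf x).congr_of_eventuallyEq (hg_chart.comp_tendsto hf.continuousAt).symm

/-- A continuous map between smooth manifolds (the target being Hausdorff and σ-compact)
which pulls back smooth real-valued functions to smooth functions is itself smooth. -/
theorem stmt_1
    {E : Type*} [NormedAddCommGroup E] [NormedSpace ℝ E] [FiniteDimensional ℝ E]
    {E' : Type*} [NormedAddCommGroup E'] [NormedSpace ℝ E'] [FiniteDimensional ℝ E']
    {M : Type*} [TopologicalSpace M] [ChartedSpace E M]
    [IsManifold 𝓘(ℝ, E) (⊤ : ℕ∞) M]
    {N : Type*} [TopologicalSpace N] [ChartedSpace E' N]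
    [IsManifold 𝓘(ℝ, E') (⊤ : ℕ∞) N]
    [T2Space N] [SigmaCompactSpace N]
    (f : M → N) (hf : Continuous f)
    (h : ∀ g : N → ℝ, ContMDiff 𝓘(ℝ, E') 𝓘(ℝ, ℝ) (⊤ : ℕ∞) g →
      ContMDiff 𝓘(ℝ, E) 𝓘(ℝ, ℝ) (⊤ : ℕ∞) (g ∘ f)) :
    ContMDiff 𝓘(ℝ, E) 𝓘(ℝ, E') (⊤ : ℕ∞) f :=
  stmt_1_general f hf h
end

section
/- Let N be a Hausdorff, σ-compact smooth manifold without boundary modelled on a finite-dimensional real normed space, and let C^∞(N,ℝ) denote the commutative ℝ-algebra of smooth real-valued functions on N. Then every ℝ-algebra homomorphism φ : C^∞(N,ℝ) → ℝ is given by evaluation at a unique point of N: there exists a unique x ∈ N such that φ(g) = g(x) for all g ∈ C^∞(N,ℝ). -/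
/-!
The zero sets `Z g = {x | g x = φ g}` are closed. They have the finite intersection property:
for finitely many `g`, the function `∑ (g - φ g)²` is killed by `φ`, so it is not a unit and
hence vanishes somewhere, i.e. at a common point of the `Z g`. For a smooth exhaustion function
`f`, the set `Z f` is compact, so all `Z g` meet at some `x`, and then `φ` is evaluation at `x`.
Uniqueness holds because smooth functions separate points.
-/

open scoped Manifold ContDiff
open Set

section Units

variable {𝕜 : Type*} [NontriviallyNormedField 𝕜] {E : Type*} [NormedAddCommGroup E]
  [NormedSpace 𝕜 E] {H : Type*} [TopologicalSpace H] {I : ModelWithCorners 𝕜 E H}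
  {M : Type*} [TopologicalSpace M] [ChartedSpace H M] {n : WithTop ℕ∞}

theorem ContMDiffMap.isUnit_of_forall_ne_zero {h : C^n⟮I, M; 𝓘(𝕜), 𝕜⟯} (h0 : ∀ x, h x ≠ 0) :
    IsUnit h :=
  isUnit_iff_exists_inv.2 ⟨⟨fun x ↦ (h x)⁻¹, h.contMDiff.inv₀ h0⟩,
    ContMDiffMap.ext fun x ↦ mul_inv_cancel₀ (h0 x)⟩

theorem ContMDiffMap.exists_apply_eq_zero_of_map_eq_zero {R : Type*} [Semiring R] [Nontrivial R]
    (φ : C^n⟮I, M; 𝓘(𝕜), 𝕜⟯ →+* R) {h : C^n⟮I, M; 𝓘(𝕜), 𝕜⟯} (hφ : φ h = 0) :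
    ∃ x, h x = 0 := by
  by_contra! h0
  exact ((isUnit_of_forall_ne_zero h0).map φ).ne_zero hφ

end Units

section RealValued

variable {E : Type*} [NormedAddCommGroup E] [NormedSpace ℝ E]
  {H : Type*} [TopologicalSpace H] {I : ModelWithCorners ℝ E H}
  {M : Type*} [TopologicalSpace M] [ChartedSpace H M]

theorem ContMDiffMap.exists_forall_apply_eq_of_algHom {n : WithTop ℕ∞}
    (φ : C^n⟮I, M; 𝓘(ℝ), ℝ⟯ →ₐ[ℝ] ℝ) (s : Finset C^n⟮I, M; 𝓘(ℝ), ℝ⟯) :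
    ∃ x, ∀ g ∈ s, g x = φ g := by
  let h := ∑ g ∈ s, (g - algebraMap ℝ _ (φ g)) ^ 2
  obtain ⟨x, hx⟩ := exists_apply_eq_zero_of_map_eq_zero φ.toRingHom (h := h) (by simp [h])
  have hsum : ∑ g ∈ s, (g x - φ g) ^ 2 = 0 :=
    (map_sum (ContMDiffMap.evalRingHom x) _ s).symm.trans hx
  refine ⟨x, fun g hg ↦ ?_⟩
  have := (Finset.sum_eq_zero_iff_of_nonneg fun _ _ ↦ sq_nonneg _).1 hsum g hg
  exact sub_eq_zero.1 (pow_eq_zero_iff two_ne_zero |>.1 this)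

variable [FiniteDimensional ℝ E] [IsManifold I ∞ M] [T2Space M] [SigmaCompactSpace M] {n : ℕ∞}

theorem exists_contMDiffMap_isCompact_preimage_Iic :
    ∃ f : C^n⟮I, M; 𝓘(ℝ), ℝ⟯, ∀ c : ℝ, IsCompact (f ⁻¹' Iic c) := by
  have : LocallyCompactSpace M := Manifold.locallyCompact_of_finiteDimensional I
  let K := CompactExhaustion.choice M
  -- Near `x`, the index `K.find` is bounded by `K.find x + 1`, so local constants suffice.
  obtain ⟨f, hf⟩ : ∃ f : C^n⟮I, M; 𝓘(ℝ), ℝ⟯, ∀ x, f x ∈ Ici (K.find x : ℝ) := by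
    refine exists_contMDiffMap_forall_mem_convex_of_local_const I (fun _ ↦ convex_Ici _)
      fun x ↦ ⟨K.find x + 1, ?_⟩
    filter_upwards [isOpen_interior.mem_nhds (K.subset_interior_succ _ (K.mem_find x))]
      with y hy
    exact mem_Ici.2 (mod_cast K.mem_iff_find_le.1 (interior_subset hy))
  refine ⟨f, fun c ↦ ?_⟩
  obtain ⟨m, hm⟩ := exists_nat_ge c
  refine (K.isCompact m).of_isClosed_subset (isClosed_Iic.preimage f.contMDiff.continuous)
    fun x hx ↦ ?_
  exact K.mem_iff_find_le.2 (by exact_mod_cast (hf x).trans (hx.trans hm))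

theorem ContMDiffMap.exists_apply_ne_apply {x y : M} (hxy : x ≠ y) :
    ∃ g : C^n⟮I, M; 𝓘(ℝ), ℝ⟯, g x ≠ g y := by
  obtain ⟨g, hx, hy, -⟩ := exists_contMDiffMap_zero_one_of_isClosed I (n := n)
    isClosed_singleton isClosed_singleton (disjoint_singleton.2 hxy)
  exact ⟨g, by simp [hx rfl, hy rfl]⟩

end RealValued

/-- Every `ℝ`-algebra homomorphism from the algebra of smooth real-valued functions on a
Hausdorff, σ-compact smooth manifold to `ℝ` is evaluation at a unique point. -/
theorem stmt_2
    {E : Type*} [NormedAddCommGroup E] [NormedSpace ℝ E] [FiniteDimensional ℝ E]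
    {N : Type*} [TopologicalSpace N] [ChartedSpace E N]
    [IsManifold 𝓘(ℝ, E) (⊤ : ℕ∞) N]
    [T2Space N] [SigmaCompactSpace N]
    (φ : ContMDiffMap 𝓘(ℝ, E) 𝓘(ℝ, ℝ) N ℝ (⊤ : ℕ∞) →ₐ[ℝ] ℝ) :
    ∃! x : N, ∀ g : ContMDiffMap 𝓘(ℝ, E) 𝓘(ℝ, ℝ) N ℝ (⊤ : ℕ∞), φ g = g x := by
  classical
  let Z (g : ContMDiffMap 𝓘(ℝ, E) 𝓘(ℝ, ℝ) N ℝ (⊤ : ℕ∞)) : Set N := {x | g x = φ g}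
  have hZ : ∀ g, IsClosed (Z g) := fun g ↦ isClosed_eq g.contMDiff.continuous continuous_const
  obtain ⟨f, hf⟩ := exists_contMDiffMap_isCompact_preimage_Iic (I := 𝓘(ℝ, E)) (M := N) (n := ⊤)
  have hZf : IsCompact (Z f) := (hf (φ f)).of_isClosed_subset (hZ f) fun x hx ↦ le_of_eq hx
  obtain ⟨x, -, hx⟩ := hZf.inter_iInter_nonempty Z hZ fun s ↦ by
    obtain ⟨x, hx⟩ := ContMDiffMap.exists_forall_apply_eq_of_algHom φ (insert f s)
    exact ⟨x, hx f (s.mem_insert_self f),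
      mem_iInter₂.2 fun g hg ↦ hx g (Finset.mem_insert_of_mem hg)⟩
  have hφ : ∀ g, g x = φ g := mem_iInter.1 hx
  refine ⟨x, fun g ↦ (hφ g).symm, fun y hy ↦ ?_⟩
  by_contra hyx
  obtain ⟨g, hg⟩ := ContMDiffMap.exists_apply_ne_apply (I := 𝓘(ℝ, E)) (n := ⊤) hyx
  exact hg ((hy g).symm.trans (hφ g).symm)
end

section
/- Let M and N be Hausdorff, σ-compact smooth manifolds without boundary modelled on finite-dimensional real normed spaces. If the ℝ-algebras C^∞(M,ℝ) and C^∞(N,ℝ) of smooth real-valued functions are isomorphic as ℝ-algebras, then M and N are diffeomorphic: there is a bijection f : M → N such that both f and its inverse are smooth. -/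
open scoped Manifold ContDiff

open Set Function Filter Topology

/-!
A character `φ : C^∞(M) → ℝ` is evaluation at a point: otherwise, for every `x` the kernel of `φ`
contains a function not vanishing at `x`. Taking a proper smooth `g`, the level set
`{g = φ g}` is compact, so `(g - φ g)²` plus finitely many squares of such functions is a
nowhere-vanishing, hence invertible, element of `ker φ`, which is absurd.

Consequently an algebra map `C^∞(N) → C^∞(M)` is composition with a map `h : M → N`, and `h` is
smooth because, near any point, a chart of `N` agrees with a global smooth map (chart times bump
function) whose coordinates are smooth functions on `N`. As smooth functions separate points,
the maps induced by `e` and `e.symm` are mutually inverse.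
-/

section

variable {E H M : Type*} [NormedAddCommGroup E] [NormedSpace ℝ E] [TopologicalSpace H]
  {I : ModelWithCorners ℝ E H} [TopologicalSpace M] [ChartedSpace H M]

namespace ContMDiffMap

section

variable {n : WithTop ℕ∞}

noncomputable def evalAlgHom (x : M) : C^n⟮I, M; 𝓘(ℝ), ℝ⟯ →ₐ[ℝ] ℝ :=
  (Pi.evalAlgHom ℝ (fun _ ↦ ℝ) x).comp coeFnAlgHom

@[simp]
theorem evalAlgHom_apply (x : M) (f : C^n⟮I, M; 𝓘(ℝ), ℝ⟯) : evalAlgHom x f = f x := rfl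

@[simp]
theorem algebraMap_apply (c : ℝ) (x : M) : algebraMap ℝ C^n⟮I, M; 𝓘(ℝ), ℝ⟯ c x = c := rfl

theorem isUnit_of_forall_ne_zero_s4 (f : C^n⟮I, M; 𝓘(ℝ), ℝ⟯) (hf : ∀ x, f x ≠ 0) : IsUnit f :=
  IsUnit.of_mul_eq_one ⟨fun x ↦ (f x)⁻¹, f.contMDiff.inv₀ hf⟩ <|
    ext fun x ↦ mul_inv_cancel₀ (hf x)

theorem exists_mem_ker_pos_on_isCompact (φ : C^n⟮I, M; 𝓘(ℝ), ℝ⟯ →ₐ[ℝ] ℝ) {K : Set M}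
    (hK : IsCompact K) (h : ∀ x ∈ K, ∃ f : C^n⟮I, M; 𝓘(ℝ), ℝ⟯, φ f = 0 ∧ f x ≠ 0) :
    ∃ f : C^n⟮I, M; 𝓘(ℝ), ℝ⟯, φ f = 0 ∧ (∀ x, 0 ≤ f x) ∧ ∀ x ∈ K, 0 < f x := by
  choose! F hF0 hFne using h
  obtain ⟨t, htK, hKt⟩ := hK.elim_nhds_subcover (fun x ↦ {y | F x y ≠ 0})
    (fun x hx ↦ (isOpen_ne.preimage (F x).contMDiff.continuous).mem_nhds (hFne x hx))
  have hsum (y : M) : (∑ x ∈ t, F x ^ 2) y = ∑ x ∈ t, F x y ^ 2 := by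
    rw [← evalAlgHom_apply, map_sum]
    simp
  refine ⟨∑ x ∈ t, F x ^ 2, ?_, fun y ↦ ?_, fun y hy ↦ ?_⟩
  · simp only [map_sum, map_pow]
    exact Finset.sum_eq_zero fun x hx ↦ by simp [hF0 x (htK x hx)]
  · rw [hsum]
    positivity
  · obtain ⟨x, hxt, hxy⟩ : ∃ x ∈ t, F x y ≠ 0 := by simpa using hKt hy
    rw [hsum]
    exact Finset.sum_pos' (fun _ _ ↦ sq_nonneg _) ⟨x, hxt, by positivity⟩

end

section

variable [FiniteDimensional ℝ E] [IsManifold I ∞ M] [T2Space M]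

theorem exists_apply_eq_one_support_subset {x : M} {s : Set M} (hs : s ∈ 𝓝 x) :
    ∃ b : C^∞⟮I, M; 𝓘(ℝ), ℝ⟯, b x = 1 ∧ support b ⊆ s := by
  obtain ⟨b, -, hb⟩ := (SmoothBumpFunction.nhds_basis_tsupport (I := I) x).mem_iff.1 hs
  exact ⟨⟨b, b.contMDiff⟩, b.eq_one, subset_tsupport _ |>.trans hb⟩

theorem eq_of_forall_apply_eq {x y : M} (h : ∀ f : C^∞⟮I, M; 𝓘(ℝ), ℝ⟯, f x = f y) : x = y := by
  by_contra hxy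
  obtain ⟨b, hby, hb⟩ := exists_apply_eq_one_support_subset (I := I)
    (isOpen_compl_singleton.mem_nhds (Ne.symm hxy))
  have hbx : b x = 0 := notMem_support.1 fun hx ↦ hb hx rfl
  rw [h b, hby] at hbx
  exact one_ne_zero hbx

end

section

variable [FiniteDimensional ℝ E] [IsManifold I ∞ M] [T2Space M] [SigmaCompactSpace M] {n : ℕ∞}

theorem exists_isCompact_preimage_Iic :
    ∃ g : C^n⟮I, M; 𝓘(ℝ), ℝ⟯, ∀ c : ℝ, IsCompact (g ⁻¹' Iic c) := by
  have := Manifold.locallyCompact_of_finiteDimensional (M := M) I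
  let K := CompactExhaustion.choice M
  have hloc (x : M) : ∃ c : ℝ, ∀ᶠ y in 𝓝 x, c ∈ Ici (K.find y : ℝ) := by
    refine ⟨K.find x + 1, ?_⟩
    filter_upwards [mem_interior_iff_mem_nhds.1 (K.subset_interior_succ _ (K.mem_find x))]
      with y hy
    simp only [mem_Ici]
    exact_mod_cast K.mem_iff_find_le.1 hy
  obtain ⟨g, hg⟩ := exists_contMDiffMap_forall_mem_convex_of_local_const I
    (fun x ↦ convex_Ici (K.find x : ℝ)) hloc
  refine ⟨g, fun c ↦ (K.isCompact ⌈c⌉₊).of_isClosed_subset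
    (isClosed_Iic.preimage g.contMDiff.continuous) fun x hx ↦ K.mem_iff_find_le.2 ?_⟩
  exact_mod_cast (hg x).trans (hx.trans (Nat.le_ceil c))

theorem exists_eq_evalAlgHom (φ : C^n⟮I, M; 𝓘(ℝ), ℝ⟯ →ₐ[ℝ] ℝ) : ∃ x, φ = evalAlgHom x := by
  by_contra! hφ
  have hker (x : M) : ∃ f : C^n⟮I, M; 𝓘(ℝ), ℝ⟯, φ f = 0 ∧ f x ≠ 0 := by
    obtain ⟨f, hf⟩ := DFunLike.ne_iff.1 (hφ x)
    exact ⟨f - algebraMap ℝ _ (φ f), by simp, by simpa [sub_eq_zero] using Ne.symm hf⟩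
  obtain ⟨g, hg⟩ := exists_isCompact_preimage_Iic (I := I) (M := M) (n := n)
  set c := φ g
  obtain ⟨f, hf0, hf_nonneg, hf_pos⟩ := exists_mem_ker_pos_on_isCompact φ
    ((hg c).of_isClosed_subset (isClosed_singleton.preimage g.contMDiff.continuous)
      fun _ hx ↦ le_of_eq hx)
    fun x _ ↦ hker x
  let P := (g - algebraMap ℝ _ c) ^ 2 + f
  have hP (x : M) : P x ≠ 0 := by
    have hPx : P x = (g x - c) ^ 2 + f x := by simp [P]
    rw [hPx]
    rcases eq_or_ne (g x) c with hgx | hgx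
    · simp [hgx, (hf_pos x hgx).ne']
    · have := hf_nonneg x
      have := sub_ne_zero.2 hgx
      positivity
  have := (isUnit_of_forall_ne_zero_s4 P hP).map φ
  simp [P, hf0, c] at this

end

end ContMDiffMap

section

variable {E' H' N : Type*} [NormedAddCommGroup E'] [NormedSpace ℝ E'] [FiniteDimensional ℝ E']
  [TopologicalSpace H'] {I' : ModelWithCorners ℝ E' H'} [TopologicalSpace N] [ChartedSpace H' N]
  {n : WithTop ℕ∞}

theorem contMDiff_of_forall_clm_comp {f : M → E'}
    (hf : ∀ ℓ : E' →L[ℝ] ℝ, ContMDiff I 𝓘(ℝ) n (ℓ ∘ f)) : ContMDiff I 𝓘(ℝ, E') n f := by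
  let b := Module.finBasis ℝ E'
  have hcoord : ContMDiff I 𝓘(ℝ, Fin (Module.finrank ℝ E') → ℝ) n (b.equivFunL ∘ f) :=
    contMDiff_pi_space.2 fun i ↦
      hf ((ContinuousLinearMap.proj i).comp b.equivFunL.toContinuousLinearMap)
  simpa [Function.comp_def] using
    (b.equivFunL.symm : (Fin (Module.finrank ℝ E') → ℝ) →L[ℝ] E').contMDiff.comp hcoord

variable [IsManifold I' ∞ N] [T2Space N]

theorem continuous_of_forall_contMDiffMap_comp {X : Type*} [TopologicalSpace X] {h : X → N}
    (hh : ∀ g : C^∞⟮I', N; 𝓘(ℝ), ℝ⟯, Continuous (g ∘ h)) : Continuous h := by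
  refine continuous_iff_continuousAt.2 fun x s hs ↦ ?_
  obtain ⟨b, hbx, hbs⟩ := ContMDiffMap.exists_apply_eq_one_support_subset (I := I') hs
  have : {z | b (h z) ≠ 0} ∈ 𝓝 x :=
    (isOpen_ne.preimage (hh b)).mem_nhds (by simp [hbx])
  exact mem_of_superset this fun z hz ↦ hbs hz

theorem exists_contMDiff_eventuallyEq_extChartAt_s4 (y : N) :
    ∃ F : N → E', ContMDiff I' 𝓘(ℝ, E') ∞ F ∧ F =ᶠ[𝓝 y] extChartAt I' y := by
  let b : SmoothBumpFunction I' y := Classical.arbitrary _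
  refine ⟨fun z ↦ b z • extChartAt I' y z, b.contMDiff_smul contMDiffOn_extChartAt, ?_⟩
  filter_upwards [b.eventuallyEq_one] with z hz
  simp [hz]

theorem contMDiff_of_forall_contMDiffMap_comp {h : M → N}
    (hh : ∀ g : C^∞⟮I', N; 𝓘(ℝ), ℝ⟯, ContMDiff I 𝓘(ℝ) n (g ∘ h)) : ContMDiff I I' n h := by
  have hcont : Continuous h := continuous_of_forall_contMDiffMap_comp fun g ↦ (hh g).continuous
  intro x
  obtain ⟨F, hF, hFeq⟩ := exists_contMDiff_eventuallyEq_extChartAt_s4 (I' := I') (h x)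
  have hFh : ContMDiff I 𝓘(ℝ, E') n (F ∘ h) :=
    contMDiff_of_forall_clm_comp fun ℓ ↦ hh ⟨ℓ ∘ F, ℓ.contMDiff.comp hF⟩
  rw [contMDiffAt_iff_target]
  exact ⟨hcont.continuousAt, (hFh x).congr_of_eventuallyEq
    ((hcont.continuousAt.eventually hFeq).mono fun _ h ↦ h.symm)⟩

theorem ContMDiffMap.eq_of_forall_comp_eq {X : Type*} {h₁ h₂ : X → N}
    (h : ∀ g : C^∞⟮I', N; 𝓘(ℝ), ℝ⟯, g ∘ h₁ = g ∘ h₂) : h₁ = h₂ :=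
  funext fun x ↦ ContMDiffMap.eq_of_forall_apply_eq fun g ↦ congrFun (h g) x

theorem ContMDiffMap.exists_contMDiff_algHom_eq_comp [SigmaCompactSpace N]
    (Φ : C^∞⟮I', N; 𝓘(ℝ), ℝ⟯ →ₐ[ℝ] C^∞⟮I, M; 𝓘(ℝ), ℝ⟯) :
    ∃ h : M → N, ContMDiff I I' ∞ h ∧ ∀ g, ⇑(Φ g) = g ∘ h := by
  choose h hh using fun x : M ↦
    ContMDiffMap.exists_eq_evalAlgHom ((ContMDiffMap.evalAlgHom x).comp Φ)
  have hΦ (g : C^∞⟮I', N; 𝓘(ℝ), ℝ⟯) : ⇑(Φ g) = g ∘ h :=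
    funext fun x ↦ DFunLike.congr_fun (hh x) g
  exact ⟨h, contMDiff_of_forall_contMDiffMap_comp fun g ↦ hΦ g ▸ (Φ g).contMDiff, hΦ⟩

end

end

/-- If the `ℝ`-algebras of smooth real-valued functions on two Hausdorff, σ-compact smooth
manifolds are isomorphic, then the manifolds are diffeomorphic. -/
theorem stmt_4
    {E : Type*} [NormedAddCommGroup E] [NormedSpace ℝ E] [FiniteDimensional ℝ E]
    {E' : Type*} [NormedAddCommGroup E'] [NormedSpace ℝ E'] [FiniteDimensional ℝ E']
    {M : Type*} [TopologicalSpace M] [ChartedSpace E M]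
    [IsManifold 𝓘(ℝ, E) (⊤ : ℕ∞) M] [T2Space M] [SigmaCompactSpace M]
    {N : Type*} [TopologicalSpace N] [ChartedSpace E' N]
    [IsManifold 𝓘(ℝ, E') (⊤ : ℕ∞) N] [T2Space N] [SigmaCompactSpace N]
    (e : ContMDiffMap 𝓘(ℝ, E) 𝓘(ℝ, ℝ) M ℝ (⊤ : ℕ∞) ≃ₐ[ℝ] ContMDiffMap 𝓘(ℝ, E') 𝓘(ℝ, ℝ) N ℝ (⊤ : ℕ∞)) :
    ∃ f : M ≃ N, ContMDiff 𝓘(ℝ, E) 𝓘(ℝ, E') (⊤ : ℕ∞) f ∧ ContMDiff 𝓘(ℝ, E') 𝓘(ℝ, E) (⊤ : ℕ∞) f.symm := by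
  obtain ⟨f, hf, hfe⟩ := ContMDiffMap.exists_contMDiff_algHom_eq_comp e.symm.toAlgHom
  obtain ⟨k, hk, hke⟩ := ContMDiffMap.exists_contMDiff_algHom_eq_comp e.toAlgHom
  have hkf : k ∘ f = id := ContMDiffMap.eq_of_forall_comp_eq fun g ↦ by
    rw [← comp_assoc, ← hke, ← hfe]
    simp
  have hfk : f ∘ k = id := ContMDiffMap.eq_of_forall_comp_eq fun g ↦ by
    rw [← comp_assoc, ← hfe, ← hke]
    simp
  exact ⟨⟨f, k, congrFun hkf, congrFun hfk⟩, hf, hk⟩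
end

section
/- Let R be a commutative ring and let F : ModuleCat R ⥤ ModuleCat R be an additive, R-linear functor which is an equivalence of categories. Then F is naturally isomorphic to the functor of tensoring with F(R): there is a natural isomorphism between F and the functor M ↦ F(R) ⊗[R] M (the functor tensorLeft (F.obj R) for the monoidal structure on ModuleCat R). -/
/-!
An equivalence `F` has a right adjoint `G`. Since `F` is `R`-linear, the adjunction gives
`R`-linear isomorphisms `G N ≅ Hom(R, G N) ≅ Hom(F R, N)`, natural in `N`, so `G ≅ ihom (F R)`.
As left adjoints of isomorphic functors, `F` and `F R ⊗ -` are isomorphic.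
-/

open CategoryTheory

universe u

namespace CategoryTheory.Adjunction

variable (R : Type*) [Semiring R] {C D : Type*} [Category C] [Category D]
  [Preadditive C] [Preadditive D] [Linear R C] [Linear R D]
  {F : C ⥤ D} {G : D ⥤ C} (adj : F ⊣ G) [F.Additive] [F.Linear R]

def homLinearEquiv (X : C) (Y : D) : (X ⟶ G.obj Y) ≃ₗ[R] (F.obj X ⟶ Y) where
  __ := (adj.homAddEquiv X Y).symm
  map_smul' r f := by simp [homEquiv_counit]

end CategoryTheory.Adjunction

namespace ModuleCat

variable {R : Type u} [CommRing R]

def homFromSelfLinearEquiv (M : ModuleCat.{u} R) : (ModuleCat.of R R ⟶ M) ≃ₗ[R] M :=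
  homLinearEquiv.trans (LinearMap.ringLmapEquivSelf R R M)

lemma homFromSelfLinearEquiv_symm_naturality {M N : ModuleCat.{u} R} (f : M ⟶ N) (x : M) :
    (homFromSelfLinearEquiv N).symm (f x) = (homFromSelfLinearEquiv M).symm x ≫ f := by
  ext
  exact (f.hom.map_smul 1 x).symm

end ModuleCat

namespace CategoryTheory.Adjunction

variable {R : Type u} [CommRing R] {F G : ModuleCat.{u} R ⥤ ModuleCat.{u} R} (adj : F ⊣ G)
  [F.Additive] [F.Linear R]

def rightAdjointIsoIhom : G ≅ ihom (F.obj (ModuleCat.of R R)) :=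
  NatIso.ofComponents
    (fun N ↦ ((ModuleCat.homFromSelfLinearEquiv (G.obj N)).symm.trans
      (adj.homLinearEquiv R _ N)).toModuleIso)
    (fun g ↦ by
      ext x
      change (adj.homEquiv _ _).symm ((ModuleCat.homFromSelfLinearEquiv _).symm (G.map g x)) =
        (adj.homEquiv _ _).symm ((ModuleCat.homFromSelfLinearEquiv _).symm x) ≫ g
      rw [ModuleCat.homFromSelfLinearEquiv_symm_naturality, homEquiv_naturality_right_symm])

def leftAdjointIsoTensorLeft : F ≅ MonoidalCategory.tensorLeft (F.obj (ModuleCat.of R R)) :=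
  adj.leftAdjointUniq ((ihom.adjunction _).ofNatIsoRight adj.rightAdjointIsoIhom.symm)

end CategoryTheory.Adjunction

/-- An additive, `R`-linear self-equivalence of the category of `R`-modules is naturally
isomorphic to tensoring with its value on `R`. -/
theorem stmt_9 {R : Type u} [CommRing R]
    (F : ModuleCat.{u} R ⥤ ModuleCat.{u} R) [F.Additive] [F.Linear R] [F.IsEquivalence] :
    Nonempty (F ≅ MonoidalCategory.tensorLeft (F.obj (ModuleCat.of R R))) :=
  ⟨(Adjunction.ofIsLeftAdjoint F).leftAdjointIsoTensorLeft⟩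
end
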